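/- arXiv:1201.5586 — 2 statements merged into one kernel-verified Lean document; each statement's English description precedes it below -/
import Mathlib

section
/- Let A be a symmetric positive semidefinite d×d real matrix with all diagonal entries equal to 1, and let Q be a d×d real matrix with zero diagonal satisfying the modified skew-symmetry condition q_{jr} + q_{rj} = 2 a_{rj} for all r ≠ j. Suppose 2A − I − Q is invertible and set δ = (2A − I − Q)^{-1} μ for μ ∈ ℝ^d. Let U : ℝ → ℝ be C² and define p(x) = exp{2(Σ_{j=1}^d U(x_j) − δ·x)}. Then the formal adjoint of G = ½ ∇·(A∇) + Ω·∇, where Ω(x) = Σ_j U'(x_j)(e_j + q_j) − μ, annihilates p: G* p = 0 on ℝ^d. -/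
/-- Partial derivative in direction `i`. -/
noncomputable def pd {d : ℕ} (f : (Fin d → ℝ) → ℝ) (i : Fin d) (x : Fin d → ℝ) : ℝ :=
  fderiv ℝ f x (Pi.single i 1)

/-- Laplacian. -/
noncomputable def lap {d : ℕ} (f : (Fin d → ℝ) → ℝ) (x : Fin d → ℝ) : ℝ :=
  ∑ i, pd (pd f i) i x

/-- Dot product on `Fin d → ℝ`. -/
def dot {d : ℕ} (u v : Fin d → ℝ) : ℝ := ∑ i, u i * v i

/-!
Write `v = U'(x) - δ` and `M = 2A - I - Q`. Then `∇p = 2pv`, `∂ᵢ∂ⱼp = p (2U''(xⱼ)[i = j] + 4vᵢvⱼ)`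
and, as `Q` has zero diagonal, `∇·Ω = Σᵢ U''(xᵢ)`; since `A` has unit diagonal the `U''` terms
cancel and `G*p = 2p (vᵀAv - Ω·v)`. The modified skew-symmetry says exactly `I + Qᵀ = M`, so
`Ω = (I + Qᵀ) U'(x) - Mδ = Mv`, and `M + Mᵀ = 2A` gives `vᵀMv = vᵀAv`.
-/

open Matrix ContinuousLinearMap

section QuadraticForm

variable {n R : Type*} [CommRing R]

theorem one_add_transpose_eq_two_smul_sub_one_sub [DecidableEq n] {A Q : Matrix n n R}
    (hAsymm : ∀ i j, A i j = A j i) (hAdiag : ∀ i, A i i = 1) (hQdiag : ∀ i, Q i i = 0)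
    (hskew : ∀ j r, j ≠ r → Q j r + Q r j = 2 * A r j) : 1 + Qᵀ = (2 : R) • A - 1 - Q := by
  ext i j
  rcases eq_or_ne i j with rfl | hij
  · simp only [Matrix.add_apply, one_apply_eq, transpose_apply, hQdiag, Matrix.sub_apply,
      Matrix.smul_apply, hAdiag, smul_eq_mul]
    ring
  · simp only [Matrix.add_apply, one_apply_ne hij, transpose_apply, Matrix.sub_apply,
      Matrix.smul_apply, smul_eq_mul]
    linear_combination hskew i j hij + 2 * hAsymm j i

theorem dotProduct_mulVec_self_eq_of_add_transpose [Fintype n] [IsDomain R] [NeZero (2 : R)]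
    {A M : Matrix n n R} (h : M + Mᵀ = (2 : R) • A) (v : n → R) :
    v ⬝ᵥ M *ᵥ v = v ⬝ᵥ A *ᵥ v := by
  have hT : v ⬝ᵥ Mᵀ *ᵥ v = v ⬝ᵥ M *ᵥ v := by
    rw [mulVec_transpose, dotProduct_comm, ← dotProduct_mulVec]
  have h2 := congrArg (fun B => v ⬝ᵥ B *ᵥ v) h
  simp only [add_mulVec, dotProduct_add, hT, smul_mulVec, dotProduct_smul, smul_eq_mul,
    ← two_mul] at h2
  exact mul_left_cancel₀ two_ne_zero h2

theorem add_vecMul_sub_mulVec_eq_mulVec_sub [Fintype n] [DecidableEq n] {Q M : Matrix n n R}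
    (hM : 1 + Qᵀ = M) (u δ : n → R) : u + u ᵥ* Q - M *ᵥ δ = M *ᵥ (u - δ) := by
  rw [← hM, mulVec_sub, add_mulVec, add_mulVec, one_mulVec, one_mulVec, mulVec_transpose,
    mulVec_transpose]

theorem add_vecMul_sub_mulVec_dotProduct_sub [Fintype n] [DecidableEq n] [IsDomain R]
    [NeZero (2 : R)] {A Q : Matrix n n R} (hQ : 1 + Qᵀ = (2 : R) • A - 1 - Q) (u δ : n → R) :
    (u + u ᵥ* Q - ((2 : R) • A - 1 - Q) *ᵥ δ) ⬝ᵥ (u - δ) = (u - δ) ⬝ᵥ A *ᵥ (u - δ) := by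
  have hsymm : ((2 : R) • A - 1 - Q) + ((2 : R) • A - 1 - Q)ᵀ = (2 : R) • A := by
    nth_rewrite 2 [← hQ]
    rw [transpose_add, transpose_transpose, transpose_one]
    abel
  rw [add_vecMul_sub_mulVec_eq_mulVec_sub hQ, dotProduct_comm,
    dotProduct_mulVec_self_eq_of_add_transpose hsymm]

end QuadraticForm

section PartialDerivatives

variable {d : ℕ}

noncomputable def potential (U : ℝ → ℝ) (δ y : Fin d → ℝ) : ℝ := ∑ l, U (y l) - dot δ y

noncomputable def density (U : ℝ → ℝ) (δ y : Fin d → ℝ) : ℝ := Real.exp (2 * potential U δ y)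

noncomputable def drift (U : ℝ → ℝ) (Q : Matrix (Fin d) (Fin d) ℝ) (μ y : Fin d → ℝ)
    (i : Fin d) : ℝ :=
  deriv U (y i) + ∑ j, deriv U (y j) * Q j i - μ i

theorem drift_eq_add_vecMul (U : ℝ → ℝ) (Q : Matrix (Fin d) (Fin d) ℝ) (μ x : Fin d → ℝ) :
    drift U Q μ x = deriv U ∘ x + (deriv U ∘ x) ᵥ* Q - μ := rfl

theorem pd_eq_of_hasFDerivAt {f : (Fin d → ℝ) → ℝ} {f' : (Fin d → ℝ) →L[ℝ] ℝ} {x : Fin d → ℝ}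
    (h : HasFDerivAt f f' x) (i : Fin d) : pd f i x = f' (Pi.single i 1) := by
  rw [pd, h.fderiv]

theorem hasFDerivAt_comp_apply {U : ℝ → ℝ} {x : Fin d → ℝ} (l : Fin d)
    (hU : DifferentiableAt ℝ U (x l)) :
    HasFDerivAt (fun y : Fin d → ℝ => U (y l))
      (deriv U (x l) • (proj l : (Fin d → ℝ) →L[ℝ] ℝ)) x :=
  hU.hasDerivAt.comp_hasFDerivAt x (hasFDerivAt_apply l x)

theorem hasFDerivAt_potential {U : ℝ → ℝ} (hU : Differentiable ℝ U) (δ x : Fin d → ℝ) :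
    HasFDerivAt (potential U δ)
      (∑ l, (deriv U (x l) - δ l) • (proj l : (Fin d → ℝ) →L[ℝ] ℝ)) x := by
  have hdot : (dot δ : (Fin d → ℝ) → ℝ) = ⇑(∑ l, δ l • (proj l : (Fin d → ℝ) →L[ℝ] ℝ)) := by
    ext y
    simp [dot]
  rw [show ∑ l, (deriv U (x l) - δ l) • (proj l : (Fin d → ℝ) →L[ℝ] ℝ) =
      ∑ l, deriv U (x l) • proj l - ∑ l, δ l • proj l by
    ext v
    simp [sub_mul]]
  exact (HasFDerivAt.fun_sum fun l _ => hasFDerivAt_comp_apply l (hU (x l))).fun_sub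
    (hdot ▸ (∑ l, δ l • (proj l : (Fin d → ℝ) →L[ℝ] ℝ)).hasFDerivAt)

theorem hasFDerivAt_density {U : ℝ → ℝ} (hU : Differentiable ℝ U) (δ x : Fin d → ℝ) :
    HasFDerivAt (density U δ) (density U δ x • (2 : ℝ) •
      ∑ l, (deriv U (x l) - δ l) • (proj l : (Fin d → ℝ) →L[ℝ] ℝ)) x :=
  (Real.hasDerivAt_exp _).comp_hasFDerivAt x ((hasFDerivAt_potential hU δ x).const_mul 2)

theorem pd_density {U : ℝ → ℝ} (hU : Differentiable ℝ U) (δ x : Fin d → ℝ) (i : Fin d) :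
    pd (density U δ) i x = 2 * (deriv U (x i) - δ i) * density U δ x := by
  rw [pd_eq_of_hasFDerivAt (hasFDerivAt_density hU δ x)]
  simp only [_root_.smul_apply, _root_.sum_apply, proj_apply, Pi.single_apply, smul_eq_mul,
    mul_ite, mul_one, mul_zero, Finset.sum_ite_eq', Finset.mem_univ, if_true]
  ring

theorem pd_pd_density {U : ℝ → ℝ} (hU : ContDiff ℝ 2 U) (δ x : Fin d → ℝ) (i j : Fin d) :
    pd (pd (density U δ) j) i x =
      (2 * (if j = i then deriv (deriv U) (x j) else 0)
        + 4 * (deriv U (x j) - δ j) * (deriv U (x i) - δ i)) * density U δ x := by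
  have hU1 : Differentiable ℝ U := hU.differentiable (by norm_num)
  have hU2 : Differentiable ℝ (deriv U) := (hU.iterate_deriv' 1 1).differentiable (by norm_num)
  have hpd : pd (density U δ) j = fun z => 2 * (deriv U (z j) - δ j) * density U δ z :=
    funext (pd_density hU1 δ · j)
  have hfactor := ((hasFDerivAt_comp_apply j (hU2 (x j))).sub_const (δ j)).const_mul 2
  rw [hpd, pd_eq_of_hasFDerivAt (hfactor.fun_mul (hasFDerivAt_density hU1 δ x))]
  simp only [_root_.add_apply, _root_.smul_apply, _root_.sum_apply, proj_apply, Pi.single_apply,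
    smul_eq_mul, mul_ite, mul_one, mul_zero, Finset.sum_ite_eq', Finset.mem_univ, if_true]
  split_ifs <;> ring

theorem pd_drift {U : ℝ → ℝ} (hU : Differentiable ℝ (deriv U)) (Q : Matrix (Fin d) (Fin d) ℝ)
    (μ x : Fin d → ℝ) (i : Fin d) :
    pd (fun y => drift U Q μ y i) i x = deriv (deriv U) (x i) * (1 + Q i i) := by
  have h : HasFDerivAt (fun y => drift U Q μ y i) _ x :=
    ((hasFDerivAt_comp_apply i (hU (x i))).fun_add (HasFDerivAt.fun_sum fun j _ =>
      (hasFDerivAt_comp_apply j (hU (x j))).mul_const (Q j i))).sub_const (μ i)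
  rw [pd_eq_of_hasFDerivAt h]
  simp only [_root_.add_apply, _root_.smul_apply, _root_.sum_apply, proj_apply, Pi.single_apply,
    smul_eq_mul, mul_ite, mul_one, mul_zero, Finset.sum_ite_eq', Finset.mem_univ, if_true]
  ring

theorem formal_adjoint_density_eq {A Q : Matrix (Fin d) (Fin d) ℝ} (hAdiag : ∀ i, A i i = 1)
    (hQdiag : ∀ i, Q i i = 0) {U : ℝ → ℝ} (hU : ContDiff ℝ 2 U) (μ δ x : Fin d → ℝ) :
    (1/2) * (∑ i, ∑ j, A i j * pd (pd (density U δ) j) i x)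
      - dot (drift U Q μ x) (fun i => pd (density U δ) i x)
      - (∑ i, pd (fun y => drift U Q μ y i) i x) * density U δ x
      = 2 * density U δ x * ((deriv U ∘ x - δ) ⬝ᵥ A *ᵥ (deriv U ∘ x - δ)
          - drift U Q μ x ⬝ᵥ (deriv U ∘ x - δ)) := by
  have hU1 : Differentiable ℝ U := hU.differentiable (by norm_num)
  have hU2 : Differentiable ℝ (deriv U) := (hU.iterate_deriv' 1 1).differentiable (by norm_num)
  have hsecond : ∑ i, ∑ j, A i j * pd (pd (density U δ) j) i x
      = 2 * density U δ x * ∑ i, deriv (deriv U) (x i)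
        + 4 * density U δ x * ((deriv U ∘ x - δ) ⬝ᵥ A *ᵥ (deriv U ∘ x - δ)) := by
    simp only [pd_pd_density hU, mul_add, add_mul, Finset.sum_add_distrib, mul_ite, mul_zero,
      ite_mul, zero_mul, Finset.sum_ite_eq', Finset.mem_univ, if_true, hAdiag]
    simp only [dotProduct, mulVec, Finset.mul_sum, Pi.sub_apply, Function.comp_apply]
    congr 1
    · exact Finset.sum_congr rfl fun i _ => by ring
    · exact Finset.sum_congr rfl fun i _ => Finset.sum_congr rfl fun j _ => by ring
  have hfirst : dot (drift U Q μ x) (fun i => pd (density U δ) i x)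
      = 2 * density U δ x * (drift U Q μ x ⬝ᵥ (deriv U ∘ x - δ)) := by
    simp only [dot, dotProduct, pd_density hU1, Finset.mul_sum, Pi.sub_apply, Function.comp_apply]
    exact Finset.sum_congr rfl fun i _ => by ring
  have hdiv : ∑ i, pd (fun y => drift U Q μ y i) i x = ∑ i, deriv (deriv U) (x i) := by
    simp [pd_drift hU2, hQdiag]
  rw [hsecond, hfirst, hdiv]
  ring

end PartialDerivatives

theorem stmt_6_general (d : ℕ) (A Q : Matrix (Fin d) (Fin d) ℝ) (μ δ : Fin d → ℝ)
    (hAsymm : ∀ i j, A i j = A j i)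
    (hAdiag : ∀ i, A i i = 1)
    (hQdiag : ∀ i, Q i i = 0)
    (hskew : ∀ j r, j ≠ r → Q j r + Q r j = 2 * A r j)
    (hδ : ∀ i, (∑ j, (2 * A i j - (if i = j then (1:ℝ) else 0) - Q i j) * δ j) = μ i)
    (U : ℝ → ℝ) (hU : ContDiff ℝ 2 U) :
    ∀ x : Fin d → ℝ,
      (1/2) * (∑ i, ∑ j, A i j *
          pd (pd (fun y => Real.exp (2 * ((∑ l, U (y l)) - dot δ y))) j) i x)
      - dot (fun i => deriv U (x i) + (∑ j, deriv U (x j) * Q j i) - μ i)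
          (fun i => pd (fun y => Real.exp (2 * ((∑ l, U (y l)) - dot δ y))) i x)
      - (∑ i, pd (fun y => deriv U (y i) + (∑ j, deriv U (y j) * Q j i) - μ i) i x)
          * Real.exp (2 * ((∑ l, U (x l)) - dot δ x)) = 0 := by
  intro x
  have hμ : ((2 : ℝ) • A - 1 - Q) *ᵥ δ = μ := by
    ext i
    simpa [mulVec, dotProduct, one_apply] using hδ i
  refine (formal_adjoint_density_eq hAdiag hQdiag hU μ δ x).trans ?_
  rw [drift_eq_add_vecMul, ← hμ, add_vecMul_sub_mulVec_dotProduct_sub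
    (one_add_transpose_eq_two_smul_sub_one_sub hAsymm hAdiag hQdiag hskew), sub_self, mul_zero]

theorem stmt_6 (d : ℕ) (A Q : Matrix (Fin d) (Fin d) ℝ) (μ δ : Fin d → ℝ)
    (hAsymm : ∀ i j, A i j = A j i)
    (hApsd : ∀ c : Fin d → ℝ, 0 ≤ ∑ i, ∑ j, c i * A i j * c j)
    (hAdiag : ∀ i, A i i = 1)
    (hQdiag : ∀ i, Q i i = 0)
    (hskew : ∀ j r, j ≠ r → Q j r + Q r j = 2 * A r j)
    (hδ : ∀ i, (∑ j, (2 * A i j - (if i = j then (1:ℝ) else 0) - Q i j) * δ j) = μ i)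
    (U : ℝ → ℝ) (hU : ContDiff ℝ 2 U) :
    ∀ x : Fin d → ℝ,
      (1/2) * (∑ i, ∑ j, A i j *
          pd (pd (fun y => Real.exp (2 * ((∑ l, U (y l)) - dot δ y))) j) i x)
      - dot (fun i => deriv U (x i) + (∑ j, deriv U (x j) * Q j i) - μ i)
          (fun i => pd (fun y => Real.exp (2 * ((∑ l, U (y l)) - dot δ y))) i x)
      - (∑ i, pd (fun y => deriv U (y i) + (∑ j, deriv U (y j) * Q j i) - μ i) i x)
          * Real.exp (2 * ((∑ l, U (x l)) - dot δ x)) = 0 :=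
  stmt_6_general d A Q μ δ hAsymm hAdiag hQdiag hskew hδ U hU
end

section
/- Let N and Q be k×d real matrices with unit rows n_r and rows q_r respectively, satisfying n_r·q_r = 0 and the skew-symmetry condition n_j·q_r + n_r·q_j = 0 for all j,r. Suppose N̄ is an invertible d×d submatrix of N (rows indexed by a set S of size d) with corresponding submatrix Q̄ of Q, and γ = (I − N̄^{-1}Q̄)^{-1} μ. Then |γ|² = γ·μ. -/
open Matrix

theorem stmt_17 (d k : ℕ) (N Q : Matrix (Fin k) (Fin d) ℝ)
    (hn : ∀ r, dot (N r) (N r) = 1)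
    (horth : ∀ r, dot (N r) (Q r) = 0)
    (hskew : ∀ j r, dot (N j) (Q r) + dot (N r) (Q j) = 0)
    (f : Fin d ↪ Fin k)
    (hinv : IsUnit (N.submatrix f id))
    (μ γ : Fin d → ℝ)
    (hγ : (N.submatrix f id - Q.submatrix f id).mulVec γ = (N.submatrix f id).mulVec μ) :
    ∑ i, (γ i) ^ 2 = ∑ i, γ i * μ i := by
  set A := N.submatrix f id with hA
  set B := Q.submatrix f id with hB
  have hdet : IsUnit A.det := (Matrix.isUnit_iff_isUnit_det A).mp hinv
  have hdetT : IsUnit Aᵀ.det := by rwa [Matrix.det_transpose]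
  set c : Fin d → ℝ := (Aᵀ)⁻¹ *ᵥ γ with hc
  have hγc : Aᵀ *ᵥ c = γ := by
    rw [hc, Matrix.mulVec_mulVec, Matrix.mul_nonsing_inv _ hdetT, Matrix.one_mulVec]
  -- skew-symmetry of B * Aᵀ
  have hskewM : ∀ x : Fin d → ℝ, x ⬝ᵥ (B * Aᵀ) *ᵥ x = 0 := by
    intro x
    have hM : (B * Aᵀ) + (B * Aᵀ)ᵀ = 0 := by
      ext j r
      have := hskew (f r) (f j)
      simp only [Matrix.add_apply, Matrix.transpose_apply, Matrix.mul_apply,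
        Matrix.transpose_apply, hA, hB, Matrix.submatrix_apply, id_eq, Matrix.zero_apply]
      have h1 := hskew (f j) (f r)
      simp only [dot] at h1
      have e1 : ∑ x, Q (f j) x * N (f r) x = ∑ x, N (f r) x * Q (f j) x :=
        Finset.sum_congr rfl (fun x _ => mul_comm _ _)
      have e2 : ∑ x, Q (f r) x * N (f j) x = ∑ x, N (f j) x * Q (f r) x :=
        Finset.sum_congr rfl (fun x _ => mul_comm _ _)
      rw [e1, e2]
      linarith
    have h1 : x ⬝ᵥ (B * Aᵀ)ᵀ *ᵥ x = x ⬝ᵥ (B * Aᵀ) *ᵥ x := by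
      rw [Matrix.mulVec_transpose, Matrix.dotProduct_mulVec, dotProduct_comm]
    have h2 : x ⬝ᵥ ((B * Aᵀ) + (B * Aᵀ)ᵀ) *ᵥ x = 0 := by rw [hM]; simp
    rw [Matrix.add_mulVec, dotProduct_add, h1] at h2
    linarith
  have key : γ ⬝ᵥ μ = γ ⬝ᵥ γ := by
    calc γ ⬝ᵥ μ = (Aᵀ *ᵥ c) ⬝ᵥ μ := by rw [hγc]
      _ = c ⬝ᵥ (A *ᵥ μ) := by
          rw [Matrix.mulVec_transpose, Matrix.dotProduct_mulVec]
      _ = c ⬝ᵥ ((A - B) *ᵥ γ) := by rw [← hγ]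
      _ = c ⬝ᵥ (A *ᵥ γ) - c ⬝ᵥ (B *ᵥ γ) := by
          rw [Matrix.sub_mulVec, dotProduct_sub]
      _ = γ ⬝ᵥ γ - c ⬝ᵥ ((B * Aᵀ) *ᵥ c) := by
          rw [Matrix.dotProduct_mulVec c A γ, ← Matrix.mulVec_transpose, hγc,
            ← Matrix.mulVec_mulVec, hγc]
      _ = γ ⬝ᵥ γ := by rw [hskewM c]; ring
  have := key
  simp only [dotProduct] at this
  calc ∑ i, (γ i) ^ 2 = ∑ i, γ i * γ i := by simp [sq]
    _ = ∑ i, γ i * μ i := this.symm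
end
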